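/- arXiv:1402.7108 — 2 statements merged into one kernel-verified Lean document; each statement's English description precedes it below -/
import Mathlib

section
/- Let K be a 2-category with a class W of 1-arrows satisfying BF1–BF4, and let V ⊆ W be a cofinal subclass: for every f : x ⟶ y in W there exist g : z ⟶ y in V and s : z ⟶ x with an invertible 2-cell s ≫ f ≅ g. Then every span x ⟵ u ⟶ y with backward leg in W is isomorphic (as a 1-arrow in the bicategory of fractions) to a span whose backward leg lies in V. -/
open CategoryTheory Bicategory

universe w v u

variable {B : Type u} [Bicategory.{w, v} B]

/-- Postcomposition with a 1-morphism, as a functor between hom-categories. -/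
@[simps] def Postcomp {a b : B} (q : a ⟶ b) (z : B) : (z ⟶ a) ⥤ (z ⟶ b) where
  obj h := h ≫ q
  map α := α ▷ q

/-- A 1-morphism is ff if all postcomposition functors are fully faithful. -/
def IsFF {a b : B} (q : a ⟶ b) : Prop :=
  ∀ z : B, (Postcomp q z).Full ∧ (Postcomp q z).Faithful

/-- Internal equivalence in a bicategory. -/
def IsIntEquiv {a b : B} (f : a ⟶ b) : Prop :=
  ∃ g : b ⟶ a, Nonempty (f ≫ g ≅ 𝟙 a) ∧ Nonempty (g ≫ f ≅ 𝟙 b)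

/-- A fully faithful singleton coverage on a 2-category; a 2-site. -/
structure TwoSite (B : Type u) [Bicategory.{w, v} B] where
  J : ∀ ⦃a b : B⦄, (a ⟶ b) → Prop
  id_mem : ∀ a : B, J (𝟙 a)
  comp_mem : ∀ ⦃a b c : B⦄ {f : a ⟶ b} {g : b ⟶ c}, J f → J g → J (f ≫ g)
  square : ∀ ⦃u x y : B⦄ (q : u ⟶ x), J q → ∀ f : y ⟶ x,
    ∃ (v : B) (k : v ⟶ y) (h : v ⟶ u), J k ∧ Nonempty (h ≫ q ≅ k ≫ f)
  ff : ∀ ⦃a b : B⦄ {q : a ⟶ b}, J q → IsFF q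

/-- A 1-arrow is J-locally split. -/
def LocallySplit (S : TwoSite B) {x y : B} (f : x ⟶ y) : Prop :=
  ∃ (u : B) (j : u ⟶ y), S.J j ∧ ∃ s : u ⟶ x, Nonempty (s ≫ f ≅ j)

/-- A weak equivalence: ff and J-locally split. -/
def WeakEquiv (S : TwoSite B) {x y : B} (f : x ⟶ y) : Prop :=
  IsFF f ∧ LocallySplit S f

/-- Pronk's BF1: W contains all equivalences. -/
def BF1 (W : ∀ ⦃a b : B⦄, (a ⟶ b) → Prop) : Prop :=
  ∀ ⦃a b : B⦄ (f : a ⟶ b), IsIntEquiv f → W f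

/-- Pronk's BF2: W is closed under composition and isomorphism. -/
def BF2 (W : ∀ ⦃a b : B⦄, (a ⟶ b) → Prop) : Prop :=
  (∀ ⦃a b c : B⦄ {f : a ⟶ b} {g : b ⟶ c}, W f → W g → W (f ≫ g)) ∧
  (∀ ⦃a b : B⦄ {f g : a ⟶ b}, W f → Nonempty (f ≅ g) → W g)

/-- Pronk's BF3: cospans with one leg in W complete to 2-commuting squares. -/
def BF3 (W : ∀ ⦃a b : B⦄, (a ⟶ b) → Prop) : Prop :=
  ∀ ⦃a a' c : B⦄ (w : a' ⟶ a) (f : c ⟶ a), W w →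
    ∃ (p : B) (v : p ⟶ c) (g : p ⟶ a'), W v ∧ Nonempty (g ≫ w ≅ v ≫ f)

/-- Pronk's BF4: 2-cells into arrows of W factor, essentially uniquely. -/
def BF4 (W : ∀ ⦃a b : B⦄, (a ⟶ b) → Prop) : Prop :=
  ∀ ⦃x y z : B⦄ (f g : x ⟶ y) (w : y ⟶ z), W w → ∀ α : f ≫ w ⟶ g ≫ w,
    (∃ (x' : B) (v : x' ⟶ x) (β : v ≫ f ⟶ v ≫ g), W v ∧
       β ▷ w = (α_ v f w).hom ≫ v ◁ α ≫ (α_ v g w).inv ∧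
       (IsIso α → IsIso β)) ∧
    (∀ (x' x'' : B) (v : x' ⟶ x) (v' : x'' ⟶ x)
       (β : v ≫ f ⟶ v ≫ g) (β' : v' ≫ f ⟶ v' ≫ g), W v → W v' →
       β ▷ w = (α_ v f w).hom ≫ v ◁ α ≫ (α_ v g w).inv →
       β' ▷ w = (α_ v' f w).hom ≫ v' ◁ α ≫ (α_ v' g w).inv →
       ∃ (t : B) (u : t ⟶ x') (u' : t ⟶ x''),
         W (u ≫ v) ∧ W (u' ≫ v') ∧
         ∃ eps : u ≫ v ≅ u' ≫ v',
           eps.hom ▷ f ≫ (α_ u' v' f).hom ≫ u' ◁ β' =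
             (α_ u v f).hom ≫ u ◁ β ≫ (α_ u v g).inv ≫
               eps.hom ▷ g ≫ (α_ u' v' g).hom)

/-- A 1-arrow of the bicategory of fractions: a span with backward leg in W. -/
structure Frac1Cell (W : ∀ ⦃a b : B⦄, (a ⟶ b) → Prop) (x y : B) where
  mid : B
  back : mid ⟶ x
  fwd : mid ⟶ y
  back_mem : W back

variable {W : ∀ ⦃a b : B⦄, (a ⟶ b) → Prop}

/-- A representing diagram for a 2-arrow of the bicategory of fractions. -/
structure Frac2CellRep {x y : B} (F₁ F₂ : Frac1Cell W x y) where
  mid : B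
  p₁ : mid ⟶ F₁.mid
  p₂ : mid ⟶ F₂.mid
  mem₁ : W (p₁ ≫ F₁.back)
  mem₂ : W (p₂ ≫ F₂.back)
  α : p₁ ≫ F₁.back ≅ p₂ ≫ F₂.back
  β : p₁ ≫ F₁.fwd ⟶ p₂ ≫ F₂.fwd

/-- The equivalence of representing diagrams in Pronk's construction:
a common refinement `t` with invertible 2-cells `γ₁, γ₂` satisfying the two
pasting conditions. -/
def FracRel {x y : B} {F₁ F₂ : Frac1Cell W x y}
    (d d' : Frac2CellRep F₁ F₂) : Prop :=
  ∃ (t : B) (q : t ⟶ d.mid) (q' : t ⟶ d'.mid)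
    (γ₁ : q ≫ d.p₁ ≅ q' ≫ d'.p₁) (γ₂ : q ≫ d.p₂ ≅ q' ≫ d'.p₂),
    W (q ≫ d.p₁ ≫ F₁.back) ∧ W (q' ≫ d'.p₁ ≫ F₁.back) ∧
    q' ◁ d'.α.hom =
      (α_ q' d'.p₁ F₁.back).inv ≫ γ₁.inv ▷ F₁.back ≫
        (α_ q d.p₁ F₁.back).hom ≫ q ◁ d.α.hom ≫
        (α_ q d.p₂ F₂.back).inv ≫ γ₂.hom ▷ F₂.back ≫
        (α_ q' d'.p₂ F₂.back).hom ∧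
    q' ◁ d'.β =
      (α_ q' d'.p₁ F₁.fwd).inv ≫ γ₁.inv ▷ F₁.fwd ≫
        (α_ q d.p₁ F₁.fwd).hom ≫ q ◁ d.β ≫
        (α_ q d.p₂ F₂.fwd).inv ≫ γ₂.hom ▷ F₂.fwd ≫
        (α_ q' d'.p₂ F₂.fwd).hom

/-- 2-arrows of the bicategory of fractions: equivalence classes of diagrams. -/
def Frac2Cell {x y : B} (F₁ F₂ : Frac1Cell W x y) : Type _ :=
  Quot (FracRel (F₁ := F₁) (F₂ := F₂))

/-- Two spans are isomorphic as 1-arrows of the bicategory of fractions: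
there is a representing diagram whose 2-cell `β` is also invertible. -/
def SpanIso {x y : B} (F₁ F₂ : Frac1Cell W x y) : Prop :=
  ∃ d : Frac2CellRep F₁ F₂, IsIso d.β

/-- `V` is a cofinal subclass of `W`. -/
def CofinalIn (V W : ∀ ⦃a b : B⦄, (a ⟶ b) → Prop) : Prop :=
  (∀ ⦃a b : B⦄ {f : a ⟶ b}, V f → W f) ∧
  ∀ ⦃x y : B⦄ (f : x ⟶ y), W f →
    ∃ (z : B) (g : z ⟶ y) (s : z ⟶ x), V g ∧ Nonempty (s ≫ f ≅ g)

/-! For a span `x ⟵ u ⟶ y` with legs `w, f`, cofinality gives `s : z ⟶ u` and `g ∈ V` with `s ≫ w ≅ g`. The span `(g, s ≫ f)` is then a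
refinement of `(w, f)` along `s`, and any such refinement is isomorphic to the original span
via the diagram with legs `s` and `𝟙`, whose forward 2-cell is invertible. -/

theorem spanIso_of_refinement
    (hW : ∀ ⦃a b : B⦄ {f g : a ⟶ b}, W f → Nonempty (f ≅ g) → W g)
    {x y : B} {F G : Frac1Cell W x y} (s : G.mid ⟶ F.mid)
    (eBack : s ≫ F.back ≅ G.back) (eFwd : s ≫ F.fwd ≅ G.fwd) : SpanIso F G :=
  ⟨{ mid := G.mid
     p₁ := s
     p₂ := 𝟙 G.mid
     mem₁ := hW G.back_mem ⟨eBack.symm⟩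
     mem₂ := hW G.back_mem ⟨(λ_ G.back).symm⟩
     α := eBack ≪≫ (λ_ G.back).symm
     β := (eFwd ≪≫ (λ_ G.fwd).symm).hom }, inferInstance⟩

/-- every span with backward leg in W is isomorphic, in the
bicategory of fractions, to one with backward leg in the cofinal class V. -/
theorem span_iso_cofinal
    (hBF : BF1 W ∧ BF2 W ∧ BF3 W ∧ BF4 W)
    (V : ∀ ⦃a b : B⦄, (a ⟶ b) → Prop) (hV : CofinalIn V W)
    {x y : B} (F : Frac1Cell W x y) :
    ∃ G : Frac1Cell W x y, V G.back ∧ SpanIso F G := by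
  obtain ⟨z, g, s, hg, ⟨e⟩⟩ := hV.2 F.back F.back_mem
  exact ⟨⟨z, g, s ≫ F.fwd, hV.1 hg⟩, hg, spanIso_of_refinement hBF.2.1.2 s e (Iso.refl _)⟩
end

section
/- Let K be a locally essentially small 2-category with a class W of 1-arrows satisfying BF1–BF4. If there exists a locally small cofinal subclass V ⊆ W (for each object y the arrows of V with codomain y form a set), then the bicategory of fractions K[W⁻¹] is locally essentially small: each hom-category K[W⁻¹](x,y) is equivalent to a small category. -/
open CategoryTheory Bicategory

universe w v u

variable {B : Type u} [Bicategory.{w, v} B]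

variable {W : ∀ ⦃a b : B⦄, (a ⟶ b) → Prop}

universe w'

/-! Cofinality lets us restrict any span `x ← m → y` along some `s : z ⟶ m` whose composite with
the backward leg is isomorphic to an arrow `g : z ⟶ x` of `V`; likewise any diagram representing a
2-arrow restricts along such an `s` to one whose apex is the domain of an arrow of `V` into `x` and
whose legs are skeletal representatives. Restriction preserves the class, so both the 1-arrows up
to isomorphism and the 2-arrows are images of a small index type: arrows of `V` into `x`, objects
of skeleta of hom-categories, and the 2-cells between them. -/

instance small_iso_of_locallySmall {C : Type*} [Category C] [LocallySmall.{w'} C] (X Y : C) :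
    Small.{w'} (X ≅ Y) :=
  small_of_injective (f := Iso.hom) fun _ _ h => Iso.ext h

def IsoClosed (W : ∀ ⦃a b : B⦄, (a ⟶ b) → Prop) : Prop :=
  ∀ ⦃a b : B⦄ {f g : a ⟶ b}, W f → Nonempty (f ≅ g) → W g

section

variable {x y : B}

theorem spanIso_of_restrict (hW : IsoClosed W) (F : Frac1Cell W x y) {z : B} (s : z ⟶ F.mid)
    {g : z ⟶ x} (hg : W g) (eg : s ≫ F.back ≅ g) {f : z ⟶ y} (ef : s ≫ F.fwd ≅ f) :
    SpanIso (⟨z, g, f, hg⟩ : Frac1Cell W x y) F :=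
  ⟨⟨z, 𝟙 z, s, hW hg ⟨(λ_ g).symm⟩, hW hg ⟨eg.symm⟩, λ_ g ≪≫ eg.symm, (λ_ f).hom ≫ ef.inv⟩,
    inferInstanceAs (IsIso ((λ_ f).hom ≫ ef.inv))⟩

variable {F₁ F₂ : Frac1Cell W x y}

def Frac2CellRep.restrict (hW : IsoClosed W) (d : Frac2CellRep F₁ F₂) {z : B} (s : z ⟶ d.mid)
    (hs : W (s ≫ d.p₁ ≫ F₁.back)) {P₁ : z ⟶ F₁.mid} {P₂ : z ⟶ F₂.mid}
    (e₁ : s ≫ d.p₁ ≅ P₁) (e₂ : s ≫ d.p₂ ≅ P₂) : Frac2CellRep F₁ F₂ where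
  mid := z
  p₁ := P₁
  p₂ := P₂
  mem₁ := hW hs ⟨(α_ _ _ _).symm ≪≫ whiskerRightIso e₁ _⟩
  mem₂ := hW hs ⟨whiskerLeftIso s d.α ≪≫ (α_ _ _ _).symm ≪≫ whiskerRightIso e₂ _⟩
  α := whiskerRightIso e₁.symm _ ≪≫ α_ _ _ _ ≪≫ whiskerLeftIso s d.α ≪≫ (α_ _ _ _).symm ≪≫
    whiskerRightIso e₂ _
  β := e₁.inv ▷ _ ≫ (α_ _ _ _).hom ≫ s ◁ d.β ≫ (α_ _ _ _).inv ≫ e₂.hom ▷ _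

theorem fracRel_restrict (hW : IsoClosed W) (d : Frac2CellRep F₁ F₂) {z : B} (s : z ⟶ d.mid)
    (hs : W (s ≫ d.p₁ ≫ F₁.back)) {P₁ : z ⟶ F₁.mid} {P₂ : z ⟶ F₂.mid}
    (e₁ : s ≫ d.p₁ ≅ P₁) (e₂ : s ≫ d.p₂ ≅ P₂) :
    FracRel d (d.restrict hW s hs e₁ e₂) := by
  refine ⟨z, s, 𝟙 z, e₁ ≪≫ (λ_ P₁).symm, e₂ ≪≫ (λ_ P₂).symm, hs,
    hW (d.restrict hW s hs e₁ e₂).mem₁ ⟨(λ_ _).symm⟩, ?_, ?_⟩ <;>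
  · dsimp only [Frac2CellRep.restrict]
    simp only [Iso.trans_hom, Iso.trans_inv, Iso.symm_hom, Iso.symm_inv,
      whiskerRightIso_hom, whiskerLeftIso_hom]
    bicategory

variable {V : ∀ ⦃a b : B⦄, (a ⟶ b) → Prop}

theorem small_quot_spanIso (hW : IsoClosed W) (hV : CofinalIn V W)
    [Small.{w'} (Σ z : B, { g : z ⟶ x // V g })] [∀ z : B, EssentiallySmall.{w'} (z ⟶ y)] :
    Small.{w'} (Quot (fun F G : Frac1Cell W x y => SpanIso F G)) := by
  let span : (Σ zg : Σ z : B, { g : z ⟶ x // V g }, Skeleton (zg.1 ⟶ y)) → Frac1Cell W x y :=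
    fun ⟨⟨z, g, hg⟩, k⟩ => ⟨z, g, (fromSkeleton _).obj k, hV.1 hg⟩
  refine small_of_surjective (f := fun t => Quot.mk _ (span t)) ?_
  rintro ⟨F⟩
  obtain ⟨z, g, s, hg, ⟨eg⟩⟩ := hV.2 F.back F.back_mem
  exact ⟨⟨⟨z, g, hg⟩, toSkeleton (s ≫ F.fwd)⟩,
    Quot.sound (spanIso_of_restrict hW F s _ eg (fromSkeletonToSkeletonIso _).symm)⟩

theorem small_frac2Cell (hW : IsoClosed W) (hV : CofinalIn V W)
    [Small.{w'} (Σ z : B, { g : z ⟶ x // V g })] [∀ a b : B, EssentiallySmall.{w'} (a ⟶ b)]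
    (F₁ F₂ : Frac1Cell W x y) : Small.{w'} (Frac2Cell F₁ F₂) := by
  let rep : (Σ (zg : Σ z : B, { g : z ⟶ x // V g }) (k₁ : Skeleton (zg.1 ⟶ F₁.mid))
      (k₂ : Skeleton (zg.1 ⟶ F₂.mid)),
      { ab : ((fromSkeleton _).obj k₁ ≫ F₁.back ≅ (fromSkeleton _).obj k₂ ≫ F₂.back) ×
          ((fromSkeleton _).obj k₁ ≫ F₁.fwd ⟶ (fromSkeleton _).obj k₂ ≫ F₂.fwd) //
        W ((fromSkeleton _).obj k₁ ≫ F₁.back) ∧ W ((fromSkeleton _).obj k₂ ≫ F₂.back) }) →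
      Frac2CellRep F₁ F₂ :=
    fun ⟨⟨z, _⟩, k₁, k₂, ⟨(a, b), h₁, h₂⟩⟩ => ⟨z, _, _, h₁, h₂, a, b⟩
  refine small_of_surjective (f := fun t => Quot.mk _ (rep t)) ?_
  rintro ⟨d⟩
  obtain ⟨z, g, s, hg, ⟨eg⟩⟩ := hV.2 (d.p₁ ≫ F₁.back) d.mem₁
  have hs : W (s ≫ d.p₁ ≫ F₁.back) := hW (hV.1 hg) ⟨eg.symm⟩
  let d' := d.restrict hW s hs (fromSkeletonToSkeletonIso _).symm
    (fromSkeletonToSkeletonIso _).symm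
  exact ⟨⟨⟨z, g, hg⟩, toSkeleton _, toSkeleton _, ⟨(d'.α, d'.β), d'.mem₁, d'.mem₂⟩⟩,
    (Quot.sound (fracRel_restrict hW d s hs _ _)).symm⟩

end

/-- if K is locally essentially small, W satisfies BF1–BF4 and
has a locally small cofinal subclass V, then the bicategory of fractions is
locally essentially small: for all x, y the collection of 1-arrows up to
isomorphism is small, and each collection of 2-arrows is small. -/
theorem fractions_locally_essentially_small
    (hK : ∀ x y : B, EssentiallySmall.{w'} (x ⟶ y))
    (hBF : BF1 W ∧ BF2 W ∧ BF3 W ∧ BF4 W)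
    (V : ∀ ⦃a b : B⦄, (a ⟶ b) → Prop) (hV : CofinalIn V W)
    (hVsmall : ∀ y : B, Small.{w'} (Σ z : B, { g : z ⟶ y // V g })) :
    ∀ x y : B,
      Small.{w'} (Quot (fun F G : Frac1Cell W x y => SpanIso F G)) ∧
      ∀ F₁ F₂ : Frac1Cell W x y, Small.{w'} (Frac2Cell F₁ F₂) := by
  intro x y
  have hW : IsoClosed W := hBF.2.1.2
  exact ⟨small_quot_spanIso hW hV, small_frac2Cell hW hV⟩
end
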